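/- Let \(r(t_1,t_2;\lambda)\) be a tensor satisfying the non-skew-symmetric spectral dynamical classical Yang-Baxter equation \([r^{(12)},r^{(13)}] + [r^{(12)},r^{(23)}] + [r^{(32)},r^{(13)}] = \sum_\alpha (\omega_\alpha^{(3)}\partial_\alpha r^{(12)} - \omega_\alpha^{(2)}\partial_\alpha r^{(13)})\), with components of \(r\) lying in \(\mathfrak{g} \otimes \mathfrak{g}^*\) so that \([r^{(13)}, r^{(23)}]\)-type brackets between two \(\mathfrak{g}^*\)-legs vanish. Then the skew-symmetrization \(\rho(t_1,t_2;\lambda) := r(t_1,t_2;\lambda) - r^{(21)}(t_2,t_1;\lambda)\) satisfies the skew-symmetric spectral dynamical classical Yang-Baxter equation \([\rho^{(12)},\rho^{(13)}] + [\rho^{(12)},\rho^{(23)}] + [\rho^{(32)},\rho^{(13)}] = \sum_\alpha (\omega_\alpha^{(1)}\partial_\alpha \rho^{(23)} - \omega_\alpha^{(2)}\partial_\alpha \rho^{(13)} + \omega_\alpha^{(3)}\partial_\alpha \rho^{(12)})\). -/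

import Mathlib

/-!
STATEMENT 3: If `r(t₁,t₂;λ)` satisfies the non-skew-symmetric spectral dynamical classical
Yang–Baxter equation, with components lying in `𝔤 ⊗ 𝔤*` (so that brackets between two
`𝔤*`-legs vanish), then its skew-symmetrization `ρ(t₁,t₂;λ) = r(t₁,t₂;λ) - r²¹(t₂,t₁;λ)`
satisfies the skew-symmetric spectral dynamical classical Yang–Baxter equation.

Set-up: `L` is the Lie algebra `𝔡 = 𝔤 ⋉ 𝔤*` with `gs ⊆ L` the abelian subspace `𝔤*`; `S`
is the commutative ring of dynamical functions of `λ`, with commuting derivations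
`Dv α = ∂/∂λ_α`; `K` is the set of spectral parameters.  All tensors live in
`T = S ⊗ U(L) ⊗ U(L) ⊗ U(L)` and are given by finite sums of pure tensors:
`r(t₁,t₂;λ) = ∑ᵢ c i t₁ t₂ ⊗ (a i) ⊗ (b i)` with `b i ∈ gs`, and
`ω_α(t;λ) = ∑ⱼ o α j t ⊗ (w α j)` with `w α j ∈ gs`.
-/

noncomputable section

set_option synthInstance.maxHeartbeats 1000000
set_option maxHeartbeats 1000000

open scoped TensorProduct

variable {S : Type} [CommRing S] [Algebra ℂ S]
variable {L : Type} [LieRing L] [LieAlgebra ℂ L]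
variable {K : Type}

local notation "UL" => UniversalEnvelopingAlgebra ℂ L
local notation "T" => S ⊗[ℂ] ((UL ⊗[ℂ] UL) ⊗[ℂ] UL)

/-- a pure tensor `s ⊗ u ⊗ v ⊗ w` of `T`. -/
def el (s : S) (u v w : UL) : T := s ⊗ₜ[ℂ] ((u ⊗ₜ[ℂ] v) ⊗ₜ[ℂ] w)

/-- the embedding `L → U(L)`. -/
def iL (x : L) : UL := UniversalEnvelopingAlgebra.ι ℂ x

variable {κ μ : Type} [Fintype κ] [Fintype μ] {N : ℕ}

section placements

variable (c : κ → K → K → S) (a b : κ → L)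

/-- `r⁽¹²⁾(s,u)`. -/
def r12 (s u : K) : T := ∑ i : κ, el (c i s u) (iL (a i)) (iL (b i)) 1
/-- `r⁽¹³⁾(s,u)`. -/
def r13 (s u : K) : T := ∑ i : κ, el (c i s u) (iL (a i)) 1 (iL (b i))
/-- `r⁽²³⁾(s,u)`. -/
def r23 (s u : K) : T := ∑ i : κ, el (c i s u) 1 (iL (a i)) (iL (b i))
/-- `r⁽²¹⁾(s,u)`. -/
def r21 (s u : K) : T := ∑ i : κ, el (c i s u) (iL (b i)) (iL (a i)) 1
/-- `r⁽³¹⁾(s,u)`. -/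
def r31 (s u : K) : T := ∑ i : κ, el (c i s u) (iL (b i)) 1 (iL (a i))
/-- `r⁽³²⁾(s,u)`. -/
def r32 (s u : K) : T := ∑ i : κ, el (c i s u) 1 (iL (b i)) (iL (a i))

variable (Dv : Fin N → Module.End ℂ S)

/-- `∂_α r⁽¹²⁾(s,u)`. -/
def rd12 (α : Fin N) (s u : K) : T :=
  ∑ i : κ, el (Dv α (c i s u)) (iL (a i)) (iL (b i)) 1
/-- `∂_α r⁽¹³⁾(s,u)`. -/
def rd13 (α : Fin N) (s u : K) : T :=
  ∑ i : κ, el (Dv α (c i s u)) (iL (a i)) 1 (iL (b i))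

/-- the skew-symmetrization `ρ⁽¹²⁾(s,u) = r⁽¹²⁾(s,u) - r⁽²¹⁾(u,s)` and its placements. -/
def p12 (s u : K) : T := r12 c a b s u - r21 c a b u s
def p13 (s u : K) : T := r13 c a b s u - r31 c a b u s
def p23 (s u : K) : T := r23 c a b s u - r32 c a b u s
def p32 (s u : K) : T := r32 c a b s u - r23 c a b u s

/-- `∂_α ρ⁽¹²⁾(s,u)` etc. -/
def pd12 (α : Fin N) (s u : K) : T :=
  ∑ i : κ, (el (Dv α (c i s u)) (iL (a i)) (iL (b i)) 1
    - el (Dv α (c i u s)) (iL (b i)) (iL (a i)) 1)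
def pd13 (α : Fin N) (s u : K) : T :=
  ∑ i : κ, (el (Dv α (c i s u)) (iL (a i)) 1 (iL (b i))
    - el (Dv α (c i u s)) (iL (b i)) 1 (iL (a i)))
def pd23 (α : Fin N) (s u : K) : T :=
  ∑ i : κ, (el (Dv α (c i s u)) 1 (iL (a i)) (iL (b i))
    - el (Dv α (c i u s)) 1 (iL (b i)) (iL (a i)))

end placements

section omegas

variable (o : Fin N → μ → K → S) (w : Fin N → μ → L)

/-- `ω_α(t;λ)` placed in leg 1, 2 or 3. -/
def om1 (α : Fin N) (s : K) : T := ∑ j : μ, el (o α j s) (iL (w α j)) 1 1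
def om2 (α : Fin N) (s : K) : T := ∑ j : μ, el (o α j s) 1 (iL (w α j)) 1
def om3 (α : Fin N) (s : K) : T := ∑ j : μ, el (o α j s) 1 1 (iL (w α j))

end omegas

/-!
Expanding `ρ = r - r²¹` bilinearly turns the left-hand side into twelve brackets of placements
of `r`. Three of them are the dynamical CYBE for `r` at `(t₁, t₂, t₃)`; three are its image at
`(t₂, t₁, t₃)` under the algebra automorphism of `T` swapping legs 1 and 2, and three its image at
`(t₃, t₂, t₁)` under the swap of legs 1 and 3. The last three brackets, `[r²¹, r³¹]`, `[r¹², r³²]`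
and `[r²³, r¹³]`, pair the `𝔤*`-legs of both factors in the same tensor slot and vanish because
`𝔤*` is abelian. The three right-hand sides then regroup into the `∂_α ρ` terms.
-/

theorem UniversalEnvelopingAlgebra.commute_ι_of_lie_eq_zero {R A : Type*} [CommRing R]
    [LieRing A] [LieAlgebra R A] {x y : A} (h : ⁅x, y⁆ = 0) :
    Commute (UniversalEnvelopingAlgebra.ι R x) (UniversalEnvelopingAlgebra.ι R y) := by
  let := LieRing.ofAssociativeRing (A := UniversalEnvelopingAlgebra R A)
  rw [commute_iff_lie_eq, ← LieHom.map_lie, h, map_zero]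

theorem Ring.lie_sub_add_lie_sub_add_lie_sub {R : Type*} [Ring R] (A B C D X Y : R) :
    ⁅A - B, C - D⁆ + ⁅A - B, X - Y⁆ + ⁅Y - X, C - D⁆
      = (⁅A, C⁆ + ⁅A, X⁆ + ⁅Y, C⁆) - (⁅B, X⁆ + ⁅B, C⁆ + ⁅D, X⁆)
        - (⁅Y, D⁆ + ⁅Y, B⁆ + ⁅A, D⁆) + ⁅B, D⁆ - ⁅A, Y⁆ - ⁅X, C⁆ := by
  simp only [Ring.lie_def]
  noncomm_ring

theorem commute_el {s s' : S} {u v w u' v' w' : UL} (hu : Commute u u') (hv : Commute v v')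
    (hw : Commute w w') : Commute (el s u v w) (el s' u' v' w') :=
  (Commute.all s s').tmul ((hu.tmul hv).tmul hw)

def legSwap12 : T →ₐ[ℂ] T :=
  Algebra.TensorProduct.map (AlgHom.id ℂ S)
    (Algebra.TensorProduct.map (Algebra.TensorProduct.comm ℂ UL UL).toAlgHom (AlgHom.id ℂ UL))

def legSwap23 : T →ₐ[ℂ] T :=
  Algebra.TensorProduct.map (AlgHom.id ℂ S)
    ((Algebra.TensorProduct.assoc ℂ ℂ ℂ UL UL UL).symm.toAlgHom.comp
      ((Algebra.TensorProduct.map (AlgHom.id ℂ UL)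
        (Algebra.TensorProduct.comm ℂ UL UL).toAlgHom).comp
        (Algebra.TensorProduct.assoc ℂ ℂ ℂ UL UL UL).toAlgHom))

def legSwap13 : T →ₐ[ℂ] T := legSwap12.comp (legSwap23.comp legSwap12)

theorem legSwap12_el (s : S) (u v w : UL) : legSwap12 (el s u v w) = el s v u w := rfl

theorem legSwap13_el (s : S) (u v w : UL) : legSwap13 (el s u v w) = el s w v u := rfl

section placements

variable (c : κ → K → K → S) (a b : κ → L) (Dv : Fin N → Module.End ℂ S)

def rd21 (α : Fin N) (s u : K) : T := ∑ i : κ, el (Dv α (c i s u)) (iL (b i)) (iL (a i)) 1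
def rd23 (α : Fin N) (s u : K) : T := ∑ i : κ, el (Dv α (c i s u)) 1 (iL (a i)) (iL (b i))
def rd31 (α : Fin N) (s u : K) : T := ∑ i : κ, el (Dv α (c i s u)) (iL (b i)) 1 (iL (a i))
def rd32 (α : Fin N) (s u : K) : T := ∑ i : κ, el (Dv α (c i s u)) 1 (iL (b i)) (iL (a i))

variable {c a b Dv}

theorem pd12_eq (α : Fin N) (s u : K) :
    pd12 c a b Dv α s u = rd12 c a b Dv α s u - rd21 c a b Dv α u s :=
  Finset.sum_sub_distrib ..

theorem pd13_eq (α : Fin N) (s u : K) :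
    pd13 c a b Dv α s u = rd13 c a b Dv α s u - rd31 c a b Dv α u s :=
  Finset.sum_sub_distrib ..

theorem pd23_eq (α : Fin N) (s u : K) :
    pd23 c a b Dv α s u = rd23 c a b Dv α s u - rd32 c a b Dv α u s :=
  Finset.sum_sub_distrib ..

theorem lie_r21_r31_eq_zero (hb : ∀ i j, ⁅b i, b j⁆ = 0) (s u s' u' : K) :
    ⁅r21 c a b s u, r31 c a b s' u'⁆ = 0 := by
  rw [← commute_iff_lie_eq, r21, r31]
  refine Commute.sum_left (R := T) _ _ _ fun i _ =>
    Commute.sum_right (R := T) _ _ _ fun j _ => ?_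
  exact commute_el (UniversalEnvelopingAlgebra.commute_ι_of_lie_eq_zero (hb i j))
    (.one_right _) (.one_left _)

theorem lie_r12_r32_eq_zero (hb : ∀ i j, ⁅b i, b j⁆ = 0) (s u s' u' : K) :
    ⁅r12 c a b s u, r32 c a b s' u'⁆ = 0 := by
  rw [← commute_iff_lie_eq, r12, r32]
  refine Commute.sum_left (R := T) _ _ _ fun i _ =>
    Commute.sum_right (R := T) _ _ _ fun j _ => ?_
  exact commute_el (.one_right _)
    (UniversalEnvelopingAlgebra.commute_ι_of_lie_eq_zero (hb i j)) (.one_left _)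

theorem lie_r23_r13_eq_zero (hb : ∀ i j, ⁅b i, b j⁆ = 0) (s u s' u' : K) :
    ⁅r23 c a b s u, r13 c a b s' u'⁆ = 0 := by
  rw [← commute_iff_lie_eq, r23, r13]
  refine Commute.sum_left (R := T) _ _ _ fun i _ =>
    Commute.sum_right (R := T) _ _ _ fun j _ => ?_
  exact commute_el (.one_left _) (.one_right _)
    (UniversalEnvelopingAlgebra.commute_ι_of_lie_eq_zero (hb i j))

variable {o : Fin N → μ → K → S} {w : Fin N → μ → L}

theorem dynCYBE_legSwap12 {t₁ t₂ t₃ : K}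
    (h : ⁅r12 c a b t₂ t₁, r13 c a b t₂ t₃⁆ + ⁅r12 c a b t₂ t₁, r23 c a b t₁ t₃⁆
        + ⁅r32 c a b t₃ t₁, r13 c a b t₂ t₃⁆
      = ∑ α : Fin N, (om3 o w α t₃ * rd12 c a b Dv α t₂ t₁
          - om2 o w α t₁ * rd13 c a b Dv α t₂ t₃)) :
    ⁅r21 c a b t₂ t₁, r23 c a b t₂ t₃⁆ + ⁅r21 c a b t₂ t₁, r13 c a b t₁ t₃⁆
        + ⁅r31 c a b t₃ t₁, r23 c a b t₂ t₃⁆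
      = ∑ α : Fin N, (om3 o w α t₃ * rd21 c a b Dv α t₂ t₁
          - om1 o w α t₁ * rd23 c a b Dv α t₂ t₃) := by
  have h' := congrArg legSwap12 h
  simp only [Ring.lie_def, map_add, map_sub, map_mul, map_sum, r12, r13, r23, r32, r21, r31,
    om1, om2, om3, rd12, rd13, rd21, rd23, legSwap12_el] at h' ⊢
  exact h'

theorem dynCYBE_legSwap13 {t₁ t₂ t₃ : K}
    (h : ⁅r12 c a b t₃ t₂, r13 c a b t₃ t₁⁆ + ⁅r12 c a b t₃ t₂, r23 c a b t₂ t₁⁆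
        + ⁅r32 c a b t₁ t₂, r13 c a b t₃ t₁⁆
      = ∑ α : Fin N, (om3 o w α t₁ * rd12 c a b Dv α t₃ t₂
          - om2 o w α t₂ * rd13 c a b Dv α t₃ t₁)) :
    ⁅r32 c a b t₃ t₂, r31 c a b t₃ t₁⁆ + ⁅r32 c a b t₃ t₂, r21 c a b t₂ t₁⁆
        + ⁅r12 c a b t₁ t₂, r31 c a b t₃ t₁⁆
      = ∑ α : Fin N, (om1 o w α t₁ * rd32 c a b Dv α t₃ t₂
          - om2 o w α t₂ * rd31 c a b Dv α t₃ t₁) := by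
  have h' := congrArg legSwap13 h
  simp only [Ring.lie_def, map_add, map_sub, map_mul, map_sum, r12, r13, r23, r32, r21, r31,
    om1, om2, om3, rd12, rd13, rd31, rd32, legSwap13_el] at h' ⊢
  exact h'

end placements

theorem skew_symmetrization_of_dynamical_CYBE_general
    (c : κ → K → K → S) (a b : κ → L)
    (o : Fin N → μ → K → S) (w : Fin N → μ → L)
    (Dv : Fin N → Module.End ℂ S)
    -- the `𝔤*`-legs: `gs` is an abelian subspace containing all `b i` and `w α j`:
    (gs : Submodule ℂ L)
    (habelian : ∀ x ∈ gs, ∀ y ∈ gs, ⁅x, y⁆ = (0 : L))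
    (hb : ∀ i, b i ∈ gs)
    -- the non-skew-symmetric spectral dynamical classical Yang-Baxter equation:
    (hdCYBE : ∀ t₁ t₂ t₃ : K,
      ⁅r12 c a b t₁ t₂, r13 c a b t₁ t₃⁆ + ⁅r12 c a b t₁ t₂, r23 c a b t₂ t₃⁆
        + ⁅r32 c a b t₃ t₂, r13 c a b t₁ t₃⁆
      = ∑ α : Fin N, (om3 o w α t₃ * rd12 c a b Dv α t₁ t₂
          - om2 o w α t₂ * rd13 c a b Dv α t₁ t₃)) :
    -- the skew-symmetric spectral dynamical classical Yang-Baxter equation for `ρ`: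
    ∀ t₁ t₂ t₃ : K,
      ⁅p12 c a b t₁ t₂, p13 c a b t₁ t₃⁆ + ⁅p12 c a b t₁ t₂, p23 c a b t₂ t₃⁆
        + ⁅p32 c a b t₃ t₂, p13 c a b t₁ t₃⁆
      = ∑ α : Fin N, (om1 o w α t₁ * pd23 c a b Dv α t₂ t₃
          - om2 o w α t₂ * pd13 c a b Dv α t₁ t₃
          + om3 o w α t₃ * pd12 c a b Dv α t₁ t₂) := by
  intro t₁ t₂ t₃
  have hbb : ∀ i j, ⁅b i, b j⁆ = 0 := fun i j => habelian _ (hb i) _ (hb j)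
  rw [p12, p13, p23, p32, Ring.lie_sub_add_lie_sub_add_lie_sub, hdCYBE,
    dynCYBE_legSwap12 (hdCYBE t₂ t₁ t₃), dynCYBE_legSwap13 (hdCYBE t₃ t₂ t₁),
    lie_r21_r31_eq_zero hbb, lie_r12_r32_eq_zero hbb, lie_r23_r13_eq_zero hbb,
    add_zero, sub_zero, sub_zero, ← Finset.sum_sub_distrib, ← Finset.sum_sub_distrib]
  refine Finset.sum_congr rfl fun α _ => ?_
  rw [pd12_eq, pd13_eq, pd23_eq]
  simp only [mul_sub (α := T)]
  abel

/-- Skew-symmetrization of solutions of the non-skew-symmetric spectral dynamical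
classical Yang–Baxter equation. -/
theorem skew_symmetrization_of_dynamical_CYBE
    (c : κ → K → K → S) (a b : κ → L)
    (o : Fin N → μ → K → S) (w : Fin N → μ → L)
    (Dv : Fin N → Module.End ℂ S)
    -- the `Dv α` are commuting derivations of `S`:
    (hder : ∀ α (x y : S), Dv α (x * y) = Dv α x * y + x * Dv α y)
    (hcomm : ∀ α β (x : S), Dv α (Dv β x) = Dv β (Dv α x))
    -- the `𝔤*`-legs: `gs` is an abelian subspace containing all `b i` and `w α j`:
    (gs : Submodule ℂ L)
    (habelian : ∀ x ∈ gs, ∀ y ∈ gs, ⁅x, y⁆ = (0 : L))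
    (hb : ∀ i, b i ∈ gs) (hw : ∀ α j, w α j ∈ gs)
    -- the non-skew-symmetric spectral dynamical classical Yang-Baxter equation:
    (hdCYBE : ∀ t₁ t₂ t₃ : K,
      ⁅r12 c a b t₁ t₂, r13 c a b t₁ t₃⁆ + ⁅r12 c a b t₁ t₂, r23 c a b t₂ t₃⁆
        + ⁅r32 c a b t₃ t₂, r13 c a b t₁ t₃⁆
      = ∑ α : Fin N, (om3 o w α t₃ * rd12 c a b Dv α t₁ t₂
          - om2 o w α t₂ * rd13 c a b Dv α t₁ t₃)) :
    -- the skew-symmetric spectral dynamical classical Yang-Baxter equation for `ρ`: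
    ∀ t₁ t₂ t₃ : K,
      ⁅p12 c a b t₁ t₂, p13 c a b t₁ t₃⁆ + ⁅p12 c a b t₁ t₂, p23 c a b t₂ t₃⁆
        + ⁅p32 c a b t₃ t₂, p13 c a b t₁ t₃⁆
      = ∑ α : Fin N, (om1 o w α t₁ * pd23 c a b Dv α t₂ t₃
          - om2 o w α t₂ * pd13 c a b Dv α t₁ t₃
          + om3 o w α t₃ * pd12 c a b Dv α t₁ t₂) :=
  skew_symmetrization_of_dynamical_CYBE_general c a b o w Dv gs habelian hb hdCYBE

end
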